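/- arXiv:2011.13985 — 2 statements merged into one kernel-verified Lean document; each statement's English description precedes it below -/
import Mathlib

section
/- Let g, f be formal power series over ℚ with g(0) = 1 and f = X·q where q(0) = 1, let M be the Riordan matrix of (g, f), let P̃̃ be the third production matrix of M, and let T be the matrix produced by P̃̃. Let N₂ be the inverse of the Riordan matrix of (1/q², X/q²). Then T = N₂·M, i.e. for all n, k, T_{n,k} = ∑_{i=0}^{n} (N₂)_{n,i}·M_{i,k}. -/
open PowerSeries Finset

/-- The Riordan matrix of the pair `(g, f)`: entries `M n k = [Xⁿ] (g * fᵏ)`. -/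
noncomputable def riordan (g f : PowerSeries ℚ) (n k : ℕ) : ℚ :=
  PowerSeries.coeff n (g * f ^ k)

lemma riordan_triangular (a b : PowerSeries ℚ) {n k : ℕ} (h : n < k) :
    riordan a (X * b) n k = 0 := by
  unfold riordan
  rw [mul_pow, show a * (X ^ k * b ^ k) = X ^ k * (a * b ^ k) by ring,
    PowerSeries.coeff_X_pow_mul', if_neg (by omega)]

lemma riordan_shift (a b : PowerSeries ℚ) (n k : ℕ) :
    riordan a (X * b) (n + 1) (k + 1) = riordan (a * b) (X * b) n k := by
  unfold riordan
  rw [show a * (X * b) ^ (k + 1) = X * (a * b * (X * b) ^ k) by ring,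
    PowerSeries.coeff_succ_X_mul]

lemma riordan_diag (s : PowerSeries ℚ) (hs : constantCoeff s = 1) (n : ℕ) :
    riordan s (X * s) n n = 1 := by
  unfold riordan
  have h := PowerSeries.coeff_X_pow_mul (s * s ^ n) n 0
  rw [zero_add] at h
  rw [mul_pow, show s * (X ^ n * s ^ n) = X ^ n * (s * s ^ n) by ring, h,
    PowerSeries.coeff_zero_eq_constantCoeff, map_mul, map_pow, hs]
  norm_num

lemma coeff_mul_range (u v : PowerSeries ℚ) (m : ℕ) :
    PowerSeries.coeff m (u * v)
      = ∑ a ∈ range (m + 1), PowerSeries.coeff a u * PowerSeries.coeff (m - a) v := by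
  rw [PowerSeries.coeff_mul, Finset.Nat.sum_antidiagonal_eq_sum_range_succ_mk]

lemma N2_triang (s : PowerSeries ℚ) (hs : constantCoeff s = 1) (N2 : ℕ → ℕ → ℚ)
    (hN1 : ∀ n k, ∑ j ∈ range (n + 1), riordan s (X * s) n j * N2 j k
          = if n = k then 1 else 0) :
    ∀ n k, n < k → N2 n k = 0 := by
  intro n
  induction n using Nat.strong_induction_on with
  | _ n ih =>
    intro k hk
    have h := hN1 n k
    rw [Finset.sum_range_succ, riordan_diag s hs, one_mul] at h
    have hz : ∑ j ∈ range n, riordan s (X * s) n j * N2 j k = 0 :=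
      Finset.sum_eq_zero fun j hj => by
        rw [ih j (mem_range.mp hj) k (lt_trans (mem_range.mp hj) hk), mul_zero]
    rw [hz, zero_add, if_neg (by omega)] at h
    exact h

lemma row_unique (s : PowerSeries ℚ) (hs : constantCoeff s = 1) (N2 : ℕ → ℕ → ℚ)
    (hN1 : ∀ n k, ∑ j ∈ range (n + 1), riordan s (X * s) n j * N2 j k
          = if n = k then 1 else 0)
    (m : ℕ) (x y : ℕ → ℚ)
    (hxy : ∀ k, ∑ a ∈ range (m + 1), x a * riordan s (X * s) a k
              = ∑ a ∈ range (m + 1), y a * riordan s (X * s) a k) :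
    ∀ a ∈ range (m + 1), x a = y a := by
  have key : ∀ z : ℕ → ℚ, ∀ a0 ∈ range (m + 1),
      ∑ k ∈ range (m + 1),
        (∑ a ∈ range (m + 1), z a * riordan s (X * s) a k) * N2 k a0 = z a0 := by
    intro z a0 ha0
    have step : ∀ k, (∑ a ∈ range (m + 1), z a * riordan s (X * s) a k) * N2 k a0
        = ∑ a ∈ range (m + 1), z a * (riordan s (X * s) a k * N2 k a0) := by
      intro k; rw [Finset.sum_mul]; exact Finset.sum_congr rfl fun a _ => by ring
    simp_rw [step]
    rw [Finset.sum_comm]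
    have inner : ∀ a ∈ range (m + 1),
        ∑ k ∈ range (m + 1), z a * (riordan s (X * s) a k * N2 k a0)
          = z a * (if a = a0 then 1 else 0) := by
      intro a ha
      rw [← Finset.mul_sum]
      congr 1
      rw [← hN1 a a0]
      symm
      apply Finset.sum_subset (Finset.range_subset_range.mpr (by
        simp only [mem_range] at ha; omega))
      intro k hk hk'
      simp only [mem_range] at hk hk'
      rw [riordan_triangular s s (by omega), zero_mul]
    rw [Finset.sum_congr rfl inner]
    simp_rw [mul_ite, mul_one, mul_zero]
    rw [Finset.sum_ite_eq' (range (m + 1)) a0 z, if_pos ha0]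
  intro a ha
  rw [← key x a ha, ← key y a ha]
  exact Finset.sum_congr rfl fun k _ => by rw [hxy k]

noncomputable def Emat (q : PowerSeries ℚ) (i a : ℕ) : ℚ :=
  if a ≤ i + 1 then PowerSeries.coeff (i + 1 - a) (q ^ 2) else 0

lemma Emat_of_le {q : PowerSeries ℚ} {i a : ℕ} (h : a ≤ i + 1) :
    Emat q i a = PowerSeries.coeff (i + 1 - a) (q ^ 2) := if_pos h

lemma Emat_of_gt {q : PowerSeries ℚ} {i a : ℕ} (h : i + 1 < a) :
    Emat q i a = 0 := if_neg (by omega)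

theorem third_production_matrix_factorization
    (g q : PowerSeries ℚ)
    (hg : constantCoeff g = 1) (hq : constantCoeff q = 1)
    (P3 T N2 : ℕ → ℕ → ℚ)
    (hP3 : ∀ n k, ∑ j ∈ range (n + 1), riordan g (X * q) n j * P3 j k
          = riordan g (X * q) (n + 3) k)
    (hT0 : ∀ k, T 0 k = if k = 0 then 1 else 0)
    (hT : ∀ n k, T (n + 1) k = ∑ j ∈ range (n + 2), T n j * P3 j (k + 2))
    (hN1 : ∀ n k, ∑ j ∈ range (n + 1), riordan (q ^ 2)⁻¹ (X * (q ^ 2)⁻¹) n j * N2 j k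
          = if n = k then 1 else 0)
    (hN2 : ∀ n k, ∑ j ∈ range (n + 1), N2 n j * riordan (q ^ 2)⁻¹ (X * (q ^ 2)⁻¹) j k
          = if n = k then 1 else 0) :
    ∀ n k, T n k = ∑ i ∈ range (n + 1), N2 n i * riordan g (X * q) i k := by
  have hs : constantCoeff (q ^ 2)⁻¹ = 1 := by
    rw [PowerSeries.constantCoeff_inv, map_pow, hq]; norm_num
  have hqs : q ^ 2 * (q ^ 2)⁻¹ = 1 :=
    PowerSeries.mul_inv_cancel _ (by rw [map_pow, hq]; norm_num)
  intro n
  induction n with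
  | zero =>
    intro k
    have hN00 : N2 0 0 = 1 := by
      have h := hN1 0 0
      rw [Finset.sum_range_one, riordan_diag _ hs, one_mul, if_pos rfl] at h
      exact h
    have hM0 : riordan g (X * q) 0 k = if k = 0 then 1 else 0 := by
      cases k with
      | zero => simp [riordan, hg]
      | succ c => rw [riordan_triangular g q (Nat.succ_pos c), if_neg (by omega)]
    rw [hT0, Finset.sum_range_one, hN00, one_mul, hM0]
  | succ n ih =>
    intro k
    -- inner sum lemma for the production step
    have hEsum : ∀ (k' : ℕ), ∀ i ∈ range (n + 1),
        ∑ a ∈ range (n + 2), Emat q i a * riordan (q ^ 2)⁻¹ (X * (q ^ 2)⁻¹) a k'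
          = PowerSeries.coeff (i + 1) ((X * (q ^ 2)⁻¹) ^ k') := by
      intro k' i hi
      simp only [mem_range] at hi
      have h1 : ∑ a ∈ range (i + 2), Emat q i a * riordan (q ^ 2)⁻¹ (X * (q ^ 2)⁻¹) a k'
          = ∑ a ∈ range (n + 2), Emat q i a * riordan (q ^ 2)⁻¹ (X * (q ^ 2)⁻¹) a k' :=
        Finset.sum_subset (Finset.range_subset_range.mpr (by omega)) (fun a ha ha' => by
          simp only [mem_range] at ha ha'
          rw [Emat_of_gt (by omega), zero_mul])
      rw [← h1]
      have h2 : ∀ a ∈ range (i + 2), Emat q i a * riordan (q ^ 2)⁻¹ (X * (q ^ 2)⁻¹) a k'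
          = PowerSeries.coeff a ((q ^ 2)⁻¹ * (X * (q ^ 2)⁻¹) ^ k')
            * PowerSeries.coeff (i + 1 - a) (q ^ 2) := by
        intro a ha
        simp only [mem_range] at ha
        rw [Emat_of_le (by omega), mul_comm]
        rfl
      rw [Finset.sum_congr rfl h2, ← coeff_mul_range]
      congr 1
      rw [mul_comm, ← mul_assoc, hqs, one_mul]
    have hrows : ∀ k',
        ∑ a ∈ range (n + 2), (∑ i ∈ range (n + 1), N2 n i * Emat q i a)
            * riordan (q ^ 2)⁻¹ (X * (q ^ 2)⁻¹) a k'
        = ∑ a ∈ range (n + 2), N2 (n + 1) a * riordan (q ^ 2)⁻¹ (X * (q ^ 2)⁻¹) a k' := by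
      intro k'
      rw [hN2 (n + 1) k']
      have swap : ∑ a ∈ range (n + 2), (∑ i ∈ range (n + 1), N2 n i * Emat q i a)
            * riordan (q ^ 2)⁻¹ (X * (q ^ 2)⁻¹) a k'
          = ∑ i ∈ range (n + 1), N2 n i *
              ∑ a ∈ range (n + 2), Emat q i a * riordan (q ^ 2)⁻¹ (X * (q ^ 2)⁻¹) a k' := by
        simp_rw [Finset.sum_mul, Finset.mul_sum]
        rw [Finset.sum_comm]
        exact Finset.sum_congr rfl fun i _ => Finset.sum_congr rfl fun a _ => by ring
      have swap2 : ∑ i ∈ range (n + 1), N2 n i *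
              ∑ a ∈ range (n + 2), Emat q i a * riordan (q ^ 2)⁻¹ (X * (q ^ 2)⁻¹) a k'
          = ∑ i ∈ range (n + 1), N2 n i
              * PowerSeries.coeff (i + 1) ((X * (q ^ 2)⁻¹) ^ k') :=
        Finset.sum_congr rfl fun i hi => by rw [hEsum k' i hi]
      rw [swap, swap2]
      cases k' with
      | zero =>
        rw [if_neg (by omega)]
        apply Finset.sum_eq_zero
        intro i _
        rw [pow_zero, PowerSeries.coeff_one, if_neg (by omega), mul_zero]
      | succ c =>
        have hco : ∀ i, PowerSeries.coeff (i + 1) ((X * (q ^ 2)⁻¹) ^ (c + 1))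
            = riordan (q ^ 2)⁻¹ (X * (q ^ 2)⁻¹) i c := by
          intro i
          rw [show (X * (q ^ 2)⁻¹) ^ (c + 1) = X * ((q ^ 2)⁻¹ * (X * (q ^ 2)⁻¹) ^ c) by ring,
            PowerSeries.coeff_succ_X_mul]
          rfl
        have step : ∑ i ∈ range (n + 1), N2 n i
              * PowerSeries.coeff (i + 1) ((X * (q ^ 2)⁻¹) ^ (c + 1))
            = ∑ i ∈ range (n + 1), N2 n i * riordan (q ^ 2)⁻¹ (X * (q ^ 2)⁻¹) i c :=
          Finset.sum_congr rfl fun i _ => by rw [hco i]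
        rw [step, hN2 n c]
        by_cases h : n = c
        · rw [if_pos h, if_pos (by omega)]
        · rw [if_neg h, if_neg (by omega)]
    have claim : ∀ a ∈ range (n + 2),
        (∑ i ∈ range (n + 1), N2 n i * Emat q i a) = N2 (n + 1) a :=
      row_unique (q ^ 2)⁻¹ hs N2 hN1 (n + 1) _ _ hrows
    calc T (n + 1) k = ∑ j ∈ range (n + 2), T n j * P3 j (k + 2) := hT n k
      _ = ∑ i ∈ range (n + 1), N2 n i *
            ∑ j ∈ range (n + 2), riordan g (X * q) i j * P3 j (k + 2) := by
          have h0 : ∀ j ∈ range (n + 2), T n j * P3 j (k + 2)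
              = ∑ i ∈ range (n + 1), N2 n i * (riordan g (X * q) i j * P3 j (k + 2)) := by
            intro j _
            rw [ih j, Finset.sum_mul]
            exact Finset.sum_congr rfl fun i _ => by ring
          rw [Finset.sum_congr rfl h0, Finset.sum_comm]
          exact Finset.sum_congr rfl fun i _ => by rw [Finset.mul_sum]
      _ = ∑ i ∈ range (n + 1), N2 n i * riordan g (X * q) (i + 3) (k + 2) := by
          refine Finset.sum_congr rfl fun i hi => ?_
          congr 1
          rw [← hP3 i (k + 2)]
          exact (Finset.sum_subset
            (Finset.range_subset_range.mpr (by simp only [mem_range] at hi; omega))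
            (fun j hj hj' => by
              simp only [mem_range] at hj hj'
              rw [riordan_triangular g q (by omega), zero_mul])).symm
      _ = ∑ i ∈ range (n + 1), N2 n i *
            ∑ a ∈ range (i + 2), riordan g (X * q) a k
              * PowerSeries.coeff (i + 1 - a) (q ^ 2) := by
          refine Finset.sum_congr rfl fun i _ => ?_
          congr 1
          have h1 : riordan g (X * q) (i + 3) (k + 2)
              = riordan (g * q * q) (X * q) (i + 1) k := by
            rw [show i + 3 = (i + 2) + 1 from rfl, show k + 2 = (k + 1) + 1 from rfl,
              riordan_shift, riordan_shift]
          have h2 : riordan (g * q * q) (X * q) (i + 1) k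
              = PowerSeries.coeff (i + 1) ((g * (X * q) ^ k) * q ^ 2) := by
            unfold riordan; congr 1; ring
          rw [h1, h2, coeff_mul_range]
          rfl
      _ = ∑ a ∈ range (n + 2), (∑ i ∈ range (n + 1), N2 n i * Emat q i a)
            * riordan g (X * q) a k := by
          have h3 : ∀ i ∈ range (n + 1),
              N2 n i * ∑ a ∈ range (i + 2), riordan g (X * q) a k
                  * PowerSeries.coeff (i + 1 - a) (q ^ 2)
              = ∑ a ∈ range (n + 2), N2 n i * (Emat q i a * riordan g (X * q) a k) := by
            intro i hi
            simp only [mem_range] at hi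
            calc N2 n i * ∑ a ∈ range (i + 2), riordan g (X * q) a k
                    * PowerSeries.coeff (i + 1 - a) (q ^ 2)
                = ∑ a ∈ range (i + 2), N2 n i * (Emat q i a * riordan g (X * q) a k) := by
                  rw [Finset.mul_sum]
                  refine Finset.sum_congr rfl fun a ha => ?_
                  simp only [mem_range] at ha
                  rw [Emat_of_le (by omega)]
                  ring
              _ = ∑ a ∈ range (n + 2), N2 n i * (Emat q i a * riordan g (X * q) a k) :=
                  Finset.sum_subset (Finset.range_subset_range.mpr (by omega)) (fun a ha ha' => by
                    simp only [mem_range] at ha ha'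
                    rw [Emat_of_gt (by omega), zero_mul, mul_zero])
          rw [Finset.sum_congr rfl h3, Finset.sum_comm]
          refine Finset.sum_congr rfl fun a _ => ?_
          rw [Finset.sum_mul]
          exact Finset.sum_congr rfl fun i _ => by ring
      _ = ∑ i ∈ range (n + 2), N2 (n + 1) i * riordan g (X * q) i k :=
          Finset.sum_congr rfl fun a ha => by rw [claim a ha]
end

section
/- Let T be the inverse of the Riordan matrix of ((1−X)³, X(1−X)³) over ℚ. Then T_{0,k} = δ_{0,k}, and for all n, k one has T_{n+1,k} = ∑_{j} b_{j,k}·T_{n,j}, where b_{j,k} = C(j−k+3, 2) if j ≥ k − 1 and b_{j,k} = 0 otherwise (the sum is finite since T_{n,j} = 0 for j > n). In other words, the matrix produced by the production matrix with entries (n,k) ↦ C(n−k+3, 2) (for k ≤ n+1, else 0) is the inverse of the Riordan matrix of ((1−X)³, X(1−X)³). -/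
open PowerSeries Finset

private lemma gfk (k : ℕ) :
    ((1 - X) ^ 3 : PowerSeries ℚ) * (X * (1 - X) ^ 3) ^ k
      = X ^ k * (1 - X) ^ (3 * k + 3) := by
  rw [mul_pow, ← pow_mul]; ring

private lemma riordan_eq (n k : ℕ) :
    riordan ((1 - X) ^ 3) (X * (1 - X) ^ 3) n k
      = if k ≤ n then
          (PowerSeries.coeff (n - k)) ((1 - X : PowerSeries ℚ) ^ (3 * k + 3))
        else 0 := by
  rw [riordan, gfk, PowerSeries.coeff_X_pow_mul']

private lemma riordan_zero (n k : ℕ) (h : n < k) :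
    riordan ((1 - X) ^ 3) (X * (1 - X) ^ 3) n k = 0 := by
  rw [riordan_eq, if_neg (by omega)]

private lemma riordan_diag_s12 (n : ℕ) :
    riordan ((1 - X) ^ 3) (X * (1 - X) ^ 3) n n = 1 := by
  rw [riordan_eq, if_pos le_rfl, Nat.sub_self]
  simp [coeff_zero_eq_constantCoeff, map_pow, map_sub]

private lemma keyA (j m : ℕ) :
    ∑ i ∈ range (j + 2),
        (if i ≤ j + 1 then (Nat.choose (j + 3 - i) 2 : ℚ) else 0)
          * riordan ((1 - X) ^ 3) (X * (1 - X) ^ 3) i m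
      = if m = 0 then 0 else riordan ((1 - X) ^ 3) (X * (1 - X) ^ 3) j (m - 1) := by
  have h1 : ((1 - X : PowerSeries ℚ) ^ 3) * (invOneSubPow ℚ 3).val = 1 := by
    rw [← invOneSubPow_inv_eq_one_sub_pow]
    exact (invOneSubPow ℚ 3).inv_val
  have hco : ∀ l, PowerSeries.coeff l ((invOneSubPow ℚ 3).val)
      = (Nat.choose (2 + l) 2 : ℚ) := by
    intro l
    rw [show (3 : ℕ) = 2 + 1 from rfl, invOneSubPow_val_succ_eq_mk_add_choose, coeff_mk]
  have key : (X ^ m * (1 - X) ^ (3 * m + 3) : PowerSeries ℚ) * (invOneSubPow ℚ 3).val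
      = X ^ m * (1 - X) ^ (3 * m) := by
    calc X ^ m * (1 - X) ^ (3 * m + 3) * ((invOneSubPow ℚ 3)).val
        = X ^ m * (1 - X) ^ (3 * m) * ((1 - X) ^ 3 * (invOneSubPow ℚ 3).val) := by ring
      _ = _ := by rw [h1, mul_one]
  have lhs_eq : (∑ i ∈ range (j + 2),
      (if i ≤ j + 1 then (Nat.choose (j + 3 - i) 2 : ℚ) else 0)
        * riordan ((1 - X) ^ 3) (X * (1 - X) ^ 3) i m)
      = PowerSeries.coeff (j + 1) (X ^ m * (1 - X) ^ (3 * m)) := by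
    rw [← key, PowerSeries.coeff_mul]
    rw [Finset.Nat.sum_antidiagonal_eq_sum_range_succ
      (fun a b => PowerSeries.coeff a (X ^ m * (1 - X) ^ (3 * m + 3))
        * PowerSeries.coeff b (invOneSubPow ℚ 3).val) (j + 1)]
    apply Finset.sum_congr rfl
    intro i hi
    rw [mem_range] at hi
    rw [if_pos (by omega), riordan, gfk, hco, mul_comm]
    congr 3
    omega
  rw [lhs_eq]
  rcases m with _ | m'
  · simp
  · rw [if_neg (by omega), riordan_eq, Nat.mul_succ,
      PowerSeries.coeff_X_pow_mul']
    simp only [Nat.succ_sub_succ_eq_sub, Nat.add_le_add_iff_right]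
    rfl

private lemma QviaM (T : ℕ → ℕ → ℚ)
    (hT1 : ∀ n k, ∑ j ∈ range (n + 1),
        riordan ((1 - X) ^ 3) (X * (1 - X) ^ 3) n j * T j k = if n = k then 1 else 0)
    (j k : ℕ) :
    (if k ≤ j + 1 then (Nat.choose (j + 3 - k) 2 : ℚ) else 0)
      = ∑ m ∈ range (j + 1),
          riordan ((1 - X) ^ 3) (X * (1 - X) ^ 3) j m * T (m + 1) k := by
  set M : ℕ → ℕ → ℚ := riordan ((1 - X) ^ 3) (X * (1 - X) ^ 3) with hM
  set Q : ℕ → ℕ → ℚ := fun a b => if b ≤ a + 1 then (Nat.choose (a + 3 - b) 2 : ℚ) else 0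
    with hQ
  have step1 : Q j k = ∑ i ∈ range (j + 2), Q j i * (if i = k then 1 else 0) := by
    simp only [mul_ite, mul_one, mul_zero]
    rw [Finset.sum_ite_eq' (range (j + 2)) k (fun i => Q j i)]
    by_cases hk : k ≤ j + 1
    · rw [if_pos (mem_range.mpr (by omega))]
    · rw [if_neg (by rw [mem_range]; omega), hQ]
      simp only [if_neg hk]
  have step2 : ∀ i ∈ range (j + 2),
      Q j i * (if i = k then 1 else 0)
        = ∑ m ∈ range (j + 2), Q j i * (M i m * T m k) := by
    intro i hi
    rw [← Finset.mul_sum]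
    congr 1
    rw [← hT1 i k]
    apply Finset.sum_subset
    · intro x hx
      rw [mem_range] at hx hi ⊢
      omega
    · intro m _ hm
      rw [mem_range] at hm
      rw [hM, riordan_zero i m (by omega), zero_mul]
  calc Q j k = ∑ i ∈ range (j + 2), ∑ m ∈ range (j + 2), Q j i * (M i m * T m k) := by
        rw [step1]; exact Finset.sum_congr rfl step2
    _ = ∑ m ∈ range (j + 2), (∑ i ∈ range (j + 2), Q j i * M i m) * T m k := by
        rw [Finset.sum_comm]
        refine Finset.sum_congr rfl fun m _ => ?_
        rw [Finset.sum_mul]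
        exact Finset.sum_congr rfl fun i _ => (mul_assoc _ _ _).symm
    _ = ∑ m ∈ range (j + 2), (if m = 0 then 0 else M j (m - 1)) * T m k := by
        exact Finset.sum_congr rfl fun m _ => by rw [keyA j m]
    _ = ∑ m ∈ range (j + 1), M j m * T (m + 1) k := by
        rw [Finset.sum_range_succ']
        simp

theorem produced_matrix_cube_case
    (T : ℕ → ℕ → ℚ)
    (hT1 : ∀ n k, ∑ j ∈ range (n + 1),
        riordan ((1 - X) ^ 3) (X * (1 - X) ^ 3) n j * T j k = if n = k then 1 else 0)
    (hT2 : ∀ n k, ∑ j ∈ range (n + 1),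
        T n j * riordan ((1 - X) ^ 3) (X * (1 - X) ^ 3) j k = if n = k then 1 else 0) :
    (∀ k, T 0 k = if k = 0 then 1 else 0)
    ∧ ∀ n k, T (n + 1) k
        = ∑ j ∈ range (n + 1),
            (if k ≤ j + 1 then (Nat.choose (j + 3 - k) 2 : ℚ) else 0) * T n j := by
  constructor
  · intro k
    have h := hT1 0 k
    rw [Finset.sum_range_one, riordan_diag_s12 0, one_mul] at h
    rw [h]
    by_cases hk : k = 0 <;> simp [hk, eq_comm]
  · intro n k
    set M : ℕ → ℕ → ℚ := riordan ((1 - X) ^ 3) (X * (1 - X) ^ 3) with hM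
    calc T (n + 1) k
        = ∑ m ∈ range (n + 1), (if n = m then 1 else 0) * T (m + 1) k := by
          simp only [ite_mul, one_mul, zero_mul]
          rw [Finset.sum_ite_eq (range (n + 1)) n (fun m => T (m + 1) k),
            if_pos (mem_range.mpr (by omega))]
      _ = ∑ m ∈ range (n + 1), (∑ j ∈ range (n + 1), T n j * M j m) * T (m + 1) k := by
          exact Finset.sum_congr rfl fun m _ => by rw [hT2 n m]
      _ = ∑ j ∈ range (n + 1), ∑ m ∈ range (n + 1), (T n j * M j m) * T (m + 1) k := by
          rw [Finset.sum_comm]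
          exact Finset.sum_congr rfl fun m _ => by rw [Finset.sum_mul]
      _ = ∑ j ∈ range (n + 1),
            (∑ m ∈ range (n + 1), M j m * T (m + 1) k) * T n j := by
          refine Finset.sum_congr rfl fun j _ => ?_
          rw [Finset.sum_mul]
          exact Finset.sum_congr rfl fun m _ => by ring
      _ = ∑ j ∈ range (n + 1),
            (∑ m ∈ range (j + 1), M j m * T (m + 1) k) * T n j := by
          refine Finset.sum_congr rfl fun j hj => ?_
          rw [mem_range] at hj
          congr 1
          symm
          apply Finset.sum_subset
          · intro x hx; rw [mem_range] at *; omega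
          · intro m _ hm
            rw [mem_range] at hm
            rw [hM, riordan_zero j m (by omega), zero_mul]
      _ = ∑ j ∈ range (n + 1),
            (if k ≤ j + 1 then (Nat.choose (j + 3 - k) 2 : ℚ) else 0) * T n j := by
          exact Finset.sum_congr rfl fun j _ => by rw [QviaM T hT1 j k]
end
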